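/- Let α > 1 be real, p ≥ 1 an integer, and set λ_i = i^{-α} for i = 1,…,p. Let k = (3 + 2^{-α})/(4 + 2^{-(α-2)}), suppose the real n satisfies 0 < n < p·k, and suppose τ > 0 satisfies Σ_{i=1}^p λ_i/(λ_i + τ) = n. Then, with c = (α sin(π/α)/π)^{α}, it holds that c · n^{α} ≤ τ^{-1} ≤ c · (n + 1 + (p + 1)/(α − 1))^{α}. -/

import Mathlib

/-!
Write `f x = (1 + τ x^α)⁻¹`, so that `λ_i / (λ_i + τ) = f i` and `n = ∑_{i=1}^p f i`. The function
`f` is decreasing and `∫_0^∞ f = τ^{-1/α} π / (α sin (π/α))`: substituting `y = x^α` and then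
`y = u / (1 - u)` turns it into the Beta integral `B(1/α, 1 - 1/α)`, evaluated by Euler's
reflection formula. Comparing the sum with the integral gives
`n ≤ ∫_0^∞ f ≤ f 0 + n + ∫_{p+1}^∞ f`.

The hypothesis `n < p k` forces `τ ≥ (p+1)^{-α}`: otherwise `f i > 1/(1 + 2^{-α})` for
`i ≤ (p+1)/2` and `f i > 1/2` for `i ≤ p`, whence `n ≥ p k` since `k` is the mean of
`1/(1 + 2^{-α})` and `1/2`. This lower bound on `τ` caps the tail `∫_{p+1}^∞ f ≤ (p+1)/(α-1)`,
and raising both bounds on `τ^{-1/α}` to the power `α` gives the claim.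
-/

open Real Set MeasureTheory

theorem integral_Ioo_rpow_mul_one_sub_rpow_neg {b : ℝ} (hb0 : 0 < b) (hb1 : b < 1) :
    ∫ u in Ioo (0 : ℝ) 1, u ^ (b - 1) * (1 - u) ^ (-b) = π / sin (π * b) := by
  have hbeta : Complex.betaIntegral b (1 - b) =
      ((∫ u in (0 : ℝ)..1, u ^ (b - 1) * (1 - u) ^ (-b) : ℝ) : ℂ) := by
    rw [Complex.betaIntegral, ← intervalIntegral.integral_ofReal]
    refine intervalIntegral.integral_congr fun u hu => ?_
    rw [uIcc_of_le zero_le_one] at hu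
    rw [show (1 - (b : ℂ) - 1) = ((-b : ℝ) : ℂ) by push_cast; ring,
      show ((b : ℂ) - 1) = ((b - 1 : ℝ) : ℂ) by push_cast; ring,
      show (1 - (u : ℂ)) = ((1 - u : ℝ) : ℂ) by push_cast; ring,
      ← Complex.ofReal_cpow hu.1, ← Complex.ofReal_cpow (sub_nonneg.2 hu.2), Complex.ofReal_mul]
  have hreflect : Complex.betaIntegral b (1 - b) = ((π / sin (π * b) : ℝ) : ℂ) := by
    rw [Complex.betaIntegral_eq_Gamma_mul_div _ _ (by simpa using hb0) (by simpa using hb1),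
      add_sub_cancel, Complex.Gamma_one, div_one, Complex.Gamma_mul_Gamma_one_sub]
    simp [Complex.ofReal_sin]
  rw [← integral_Ioc_eq_integral_Ioo, ← intervalIntegral.integral_of_le zero_le_one]
  exact_mod_cast hbeta.symm.trans hreflect

theorem image_div_one_sub_Ioo : (fun u : ℝ => u / (1 - u)) '' Ioo 0 1 = Ioi 0 := by
  ext x
  constructor
  · rintro ⟨u, hu, rfl⟩
    exact div_pos hu.1 (sub_pos.2 hu.2)
  · intro (hx : 0 < x)
    refine ⟨x / (1 + x), ⟨by positivity, (div_lt_one (by positivity)).2 (by linarith)⟩, ?_⟩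
    field_simp
    ring

theorem integral_rpow_div_one_add {b : ℝ} (hb0 : 0 < b) (hb1 : b < 1) :
    ∫ x in Ioi (0 : ℝ), x ^ (b - 1) / (1 + x) = π / sin (π * b) := by
  have hderiv : ∀ u ∈ Ioo (0 : ℝ) 1,
      HasDerivWithinAt (fun u : ℝ => u / (1 - u)) ((1 - u) ^ 2)⁻¹ (Ioo 0 1) u := by
    intro u hu
    have h1u : 1 - u ≠ 0 := (sub_pos.2 hu.2).ne'
    refine ((hasDerivAt_id' u).div ((hasDerivAt_id' u).const_sub 1) h1u).hasDerivWithinAt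
      |>.congr_deriv ?_
    field_simp
    ring
  have hinj : InjOn (fun u : ℝ => u / (1 - u)) (Ioo 0 1) := by
    refine StrictMonoOn.injOn fun u hu v hv huv => ?_
    rw [div_lt_div_iff₀ (sub_pos.2 hu.2) (sub_pos.2 hv.2)]
    nlinarith
  rw [← image_div_one_sub_Ioo, integral_image_eq_integral_abs_deriv_smul measurableSet_Ioo
    hderiv hinj, ← integral_Ioo_rpow_mul_one_sub_rpow_neg hb0 hb1]
  refine setIntegral_congr_fun measurableSet_Ioo fun u ⟨hu0, hu1⟩ => ?_
  have hv : 0 < 1 - u := sub_pos.2 hu1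
  have hpow : (1 - u) ^ (b - 1) = (1 - u)⁻¹ / (1 - u) ^ (-b) := by
    rw [eq_div_iff (by positivity), ← rpow_neg_one, ← rpow_add hv]
    ring_nf
  simp only [smul_eq_mul]
  rw [abs_of_pos (by positivity), div_rpow hu0.le hv.le, hpow]
  field_simp
  ring

theorem integral_inv_one_add_rpow {α : ℝ} (hα : 1 < α) :
    ∫ x in Ioi (0 : ℝ), (1 + x ^ α)⁻¹ = π / (α * sin (π / α)) := by
  have hα0 : 0 < α := by linarith
  have hsubst := integral_comp_rpow_Ioi_of_pos (g := fun y : ℝ => y ^ (α⁻¹ - 1) / (1 + y)) hα0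
  rw [integral_rpow_div_one_add (inv_pos.2 hα0) (inv_lt_one_of_one_lt₀ hα),
    ← div_eq_mul_inv] at hsubst
  rw [mul_comm α, ← div_div, ← hsubst, ← integral_div]
  refine setIntegral_congr_fun measurableSet_Ioi fun x (hx : 0 < x) => ?_
  have hpow : (x ^ α) ^ (α⁻¹ - 1) = x ^ (1 - α) := by
    rw [← rpow_mul hx.le, mul_sub, mul_inv_cancel₀ hα0.ne', mul_one]
  have hcancel : x ^ (α - 1) * x ^ (1 - α) = 1 := by
    rw [← rpow_add hx, sub_add_sub_cancel', sub_self, rpow_zero]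
  simp only [smul_eq_mul]
  rw [hpow, mul_div_assoc', mul_assoc, hcancel]
  field_simp

theorem integral_inv_one_add_mul_rpow {α τ : ℝ} (hα : 1 < α) (hτ : 0 < τ) :
    ∫ x in Ioi (0 : ℝ), (1 + τ * x ^ α)⁻¹ = τ ^ (-α⁻¹) * (π / (α * sin (π / α))) := by
  have hα0 : 0 < α := by linarith
  have hscale : 0 < τ ^ α⁻¹ := rpow_pos_of_pos hτ _
  have hsubst := integral_comp_mul_left_Ioi (fun y : ℝ => (1 + y ^ α)⁻¹) 0 hscale
  rw [mul_zero, integral_inv_one_add_rpow hα, smul_eq_mul, ← rpow_neg hτ.le] at hsubst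
  rw [← hsubst]
  refine setIntegral_congr_fun measurableSet_Ioi fun x (hx : 0 < x) => ?_
  rw [mul_rpow hscale.le hx.le, ← rpow_mul hτ.le, inv_mul_cancel₀ hα0.ne', rpow_one]

theorem sin_pi_div_pos {α : ℝ} (hα : 1 < α) : 0 < sin (π / α) :=
  sin_pos_of_pos_of_lt_pi (div_pos pi_pos (by linarith)) (div_lt_self pi_pos hα)

/-- A non-integrable function has Bochner integral `0`, so the explicit positive value of the
integral already certifies integrability. -/
theorem integrableOn_Ioi_inv_one_add_mul_rpow {α τ : ℝ} (hα : 1 < α) (hτ : 0 < τ) :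
    IntegrableOn (fun x : ℝ => (1 + τ * x ^ α)⁻¹) (Ioi 0) := by
  have hsin := sin_pi_div_pos hα
  have hα0 : 0 < α := by linarith
  refine Integrable.of_integral_ne_zero ?_
  rw [integral_inv_one_add_mul_rpow hα hτ]
  positivity

theorem antitoneOn_inv_one_add_mul_rpow {α τ : ℝ} (hα : 0 ≤ α) (hτ : 0 ≤ τ) :
    AntitoneOn (fun x : ℝ => (1 + τ * x ^ α)⁻¹) (Ici 0) := fun x (hx : 0 ≤ x) y _ hxy => by
  dsimp only
  gcongr

theorem setIntegral_Ioi_inv_one_add_mul_rpow_le {α τ a : ℝ} (hα : 1 < α) (ha : 0 < a)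
    (hτa : a ^ (-α) ≤ τ) :
    ∫ x in Ioi a, (1 + τ * x ^ α)⁻¹ ≤ a / (α - 1) := by
  have hτ : 0 < τ := (rpow_pos_of_pos ha _).trans_le hτa
  have hpow : IntegrableOn (fun x : ℝ => x ^ (-α)) (Ioi a) :=
    integrableOn_Ioi_rpow_of_lt (by linarith) ha
  have hτinv : τ⁻¹ ≤ a ^ α := by
    simpa [rpow_neg ha.le] using inv_anti₀ (rpow_pos_of_pos ha _) hτa
  calc ∫ x in Ioi a, (1 + τ * x ^ α)⁻¹ ≤ ∫ x in Ioi a, τ⁻¹ * x ^ (-α) := by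
        refine setIntegral_mono_on ((integrableOn_Ioi_inv_one_add_mul_rpow hα hτ).mono_set
          (Ioi_subset_Ioi ha.le)) (hpow.const_mul _) measurableSet_Ioi fun x (hx : a < x) => ?_
        have hx0 : 0 < x := ha.trans hx
        rw [rpow_neg hx0.le, ← mul_inv]
        gcongr
        linarith
    _ = τ⁻¹ * a ^ (1 - α) / (α - 1) := by
        rw [integral_const_mul, integral_Ioi_rpow_of_lt (by linarith) ha, mul_div_assoc,
          show -α + 1 = 1 - α by ring, neg_div, ← div_neg, neg_sub]
    _ ≤ a ^ α * a ^ (1 - α) / (α - 1) := by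
        gcongr
    _ = a / (α - 1) := by
        rw [← rpow_add ha, add_sub_cancel, rpow_one]

theorem Finset.sum_Icc_one_eq_sum_range_succ {M : Type*} [AddCommMonoid M] (g : ℕ → M) (p : ℕ) :
    ∑ i ∈ Finset.Icc 1 p, g i = ∑ i ∈ Finset.range p, g (i + 1) := by
  rw [Finset.range_eq_Ico, Finset.sum_Ico_add' g, ← Finset.Ico_add_one_right_eq_Icc, zero_add]

section SumIntegralComparison

variable {g : ℝ → ℝ}

theorem AntitoneOn.sum_Icc_le_integral_Ioi (hg : AntitoneOn g (Ici 0))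
    (hint : IntegrableOn g (Ioi 0)) (hnonneg : ∀ x ∈ Ioi 0, 0 ≤ g x) (p : ℕ) :
    ∑ i ∈ Finset.Icc 1 p, g i ≤ ∫ x in Ioi 0, g x := by
  rw [Finset.sum_Icc_one_eq_sum_range_succ (fun i : ℕ => g i)]
  exact_mod_cast (hg.mono Icc_subset_Ici_self).sum_range_le_integral hint hnonneg

theorem AntitoneOn.integral_Ioi_le_sum_Icc_add (hg : AntitoneOn g (Ici 0))
    (hint : IntegrableOn g (Ioi 0)) (p : ℕ) :
    ∫ x in Ioi 0, g x ≤ g 0 + ∑ i ∈ Finset.Icc 1 p, g i + ∫ x in Ioi ((p : ℝ) + 1), g x := by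
  have hp : (0 : ℝ) ≤ p + 1 := by positivity
  rw [← intervalIntegral.integral_interval_add_Ioi hint (hint.mono_set (Ioi_subset_Ioi hp))]
  gcongr
  calc ∫ x in 0..(p : ℝ) + 1, g x ≤ ∑ i ∈ Finset.range (p + 1), g (0 + i) := by
        simpa using (hg.mono Icc_subset_Ici_self).integral_le_sum (x₀ := 0) (a := p + 1)
    _ = g 0 + ∑ i ∈ Finset.Icc 1 p, g i := by
        rw [Finset.sum_range_succ', Finset.sum_Icc_one_eq_sum_range_succ (fun i : ℕ => g i)]
        simp [add_comm]

end SumIntegralComparison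

theorem mul_add_div_two_le_sum_Icc {g : ℕ → ℝ} {a b : ℝ} {p : ℕ} (hba : b ≤ a)
    (ha : ∀ i ∈ Finset.Icc 1 ((p + 1) / 2), a ≤ g i) (hb : ∀ i ∈ Finset.Icc 1 p, b ≤ g i) :
    p * ((a + b) / 2) ≤ ∑ i ∈ Finset.Icc 1 p, g i := by
  set q := (p + 1) / 2
  have hqp : q ≤ p := by omega
  have hlow : (q : ℝ) * a ≤ ∑ i ∈ Finset.Icc 1 q, g i := by
    simpa using Finset.card_nsmul_le_sum _ _ _ ha
  have hhigh : ((p : ℝ) - q) * b ≤ ∑ i ∈ Finset.Ioc q p, g i := by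
    simpa [Nat.cast_sub hqp] using
      Finset.card_nsmul_le_sum _ _ _ fun i hi =>
        hb i (Finset.Ioc_subset_Ioc_left (Nat.zero_le q) hi)
  have hsplit : ∑ i ∈ Finset.Icc 1 q, g i + ∑ i ∈ Finset.Ioc q p, g i =
      ∑ i ∈ Finset.Icc 1 p, g i :=
    Finset.sum_Ioc_consecutive g (Nat.zero_le q) hqp
  have hq : (p : ℝ) ≤ 2 * q := by norm_cast; omega
  nlinarith

theorem mul_rpow_le_div_rpow {α τ x a : ℝ} (hx : 0 ≤ x) (ha : 0 < a)
    (hτ : τ ≤ a ^ (-α)) : τ * x ^ α ≤ (x / a) ^ α := by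
  rw [div_rpow hx ha.le, div_eq_mul_inv, mul_comm, ← rpow_neg ha.le]
  gcongr

theorem three_add_div_four_add_eq (α : ℝ) :
    (3 + (2 : ℝ) ^ (-α)) / (4 + (2 : ℝ) ^ (-(α - 2))) = ((1 + (2 : ℝ) ^ (-α))⁻¹ + 2⁻¹) / 2 := by
  have h4 : (2 : ℝ) ^ (-(α - 2)) = 4 * 2 ^ (-α) := by
    rw [show -(α - 2) = -α + 2 by ring, rpow_add two_pos, rpow_two]
    ring
  rw [h4]
  field_simp
  ring

theorem add_one_rpow_neg_le_of_sum_lt {α τ : ℝ} {p : ℕ} (hα : 0 ≤ α) (hτ : 0 ≤ τ)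
    (hsum : ∑ i ∈ Finset.Icc 1 p, (1 + τ * (i : ℝ) ^ α)⁻¹ <
      p * (((1 + (2 : ℝ) ^ (-α))⁻¹ + 2⁻¹) / 2)) :
    ((p : ℝ) + 1) ^ (-α) ≤ τ := by
  by_contra! hlt
  have hp : (0 : ℝ) < p + 1 := by positivity
  have hbound : ∀ i ∈ Finset.Icc 1 p, τ * (i : ℝ) ^ α ≤ ((i : ℝ) / (p + 1)) ^ α :=
    fun i _ => mul_rpow_le_div_rpow i.cast_nonneg hp hlt.le
  refine hsum.not_ge (mul_add_div_two_le_sum_Icc ?_ (fun i hi => ?_) (fun i hi => ?_))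
  · have := rpow_le_one_of_one_le_of_nonpos one_le_two (neg_nonpos.2 hα)
    rw [show (2 : ℝ)⁻¹ = (1 + 1)⁻¹ by norm_num]
    gcongr
  · obtain ⟨hi1, hiq⟩ := Finset.mem_Icc.1 hi
    have hhalf : (i : ℝ) / (p + 1) ≤ 2⁻¹ := by
      rw [div_le_iff₀ hp]
      have : (2 * i : ℝ) ≤ p + 1 := by exact_mod_cast (by omega : 2 * i ≤ p + 1)
      linarith
    have := (hbound i (Finset.mem_Icc.2 ⟨hi1, by omega⟩)).trans
      (rpow_le_rpow (by positivity) hhalf hα)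
    rw [inv_rpow zero_le_two, ← rpow_neg zero_le_two] at this
    gcongr
  · have hle : (i : ℝ) / (p + 1) ≤ 1 := by
      rw [div_le_one hp]
      exact_mod_cast (Finset.mem_Icc.1 hi).2.trans (Nat.le_succ p)
    have := (hbound i hi).trans (rpow_le_one (by positivity) hle hα)
    rw [show (2 : ℝ)⁻¹ = (1 + 1)⁻¹ by norm_num]
    gcongr

theorem sum_Icc_inv_one_add_mul_rpow_le_integral {α τ : ℝ} (hα : 1 < α) (hτ : 0 < τ) (p : ℕ) :
    ∑ i ∈ Finset.Icc 1 p, (1 + τ * (i : ℝ) ^ α)⁻¹ ≤ ∫ x in Ioi (0 : ℝ), (1 + τ * x ^ α)⁻¹ :=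
  (antitoneOn_inv_one_add_mul_rpow (by linarith) hτ.le).sum_Icc_le_integral_Ioi
    (integrableOn_Ioi_inv_one_add_mul_rpow hα hτ)
    (fun x (hx : 0 < x) => show 0 ≤ (1 + τ * x ^ α)⁻¹ by positivity) p

theorem integral_inv_one_add_mul_rpow_le_sum_Icc_add {α τ : ℝ} {p : ℕ} (hα : 1 < α)
    (hτp : ((p : ℝ) + 1) ^ (-α) ≤ τ) :
    ∫ x in Ioi (0 : ℝ), (1 + τ * x ^ α)⁻¹ ≤
      1 + ∑ i ∈ Finset.Icc 1 p, (1 + τ * (i : ℝ) ^ α)⁻¹ + (p + 1) / (α - 1) := by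
  have hτ : 0 < τ := (rpow_pos_of_pos (by positivity) _).trans_le hτp
  have hsplit := (antitoneOn_inv_one_add_mul_rpow (by linarith) hτ.le).integral_Ioi_le_sum_Icc_add
    (integrableOn_Ioi_inv_one_add_mul_rpow hα hτ) p
  have htail := setIntegral_Ioi_inv_one_add_mul_rpow_le hα (by positivity) hτp
  beta_reduce at hsplit
  rw [zero_rpow (by linarith), mul_zero, add_zero, inv_one] at hsplit
  linarith

theorem rpow_neg_div_rpow_neg_add {x : ℝ} (hx : 0 < x) (α τ : ℝ) :
    x ^ (-α) / (x ^ (-α) + τ) = (1 + τ * x ^ α)⁻¹ := by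
  have : x ^ α ≠ 0 := (rpow_pos_of_pos hx α).ne'
  rw [rpow_neg hx.le]
  field_simp

theorem inv_eq_inv_rpow_mul_rpow {α τ I : ℝ} (hα : α ≠ 0) (hτ : 0 < τ) (hI : 0 < I) :
    τ⁻¹ = I⁻¹ ^ α * (τ ^ (-α⁻¹) * I) ^ α := by
  rw [← mul_rpow (by positivity) (by positivity), mul_comm _ I, inv_mul_cancel_left₀ hI.ne',
    ← rpow_mul hτ.le, neg_mul, inv_mul_cancel₀ hα, rpow_neg_one]

theorem effective_ridge_nonasymptotic_bounds_general
    (α : ℝ) (hα : 1 < α) (p : ℕ)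
    (k : ℝ) (hk : k = (3 + (2 : ℝ) ^ (-α)) / (4 + (2 : ℝ) ^ (-(α - 2))))
    (n : ℝ) (hn0 : 0 < n) (hnp : n < p * k)
    (τ : ℝ) (hτ : 0 < τ)
    (hsum : ∑ i ∈ Finset.Icc 1 p, (i : ℝ) ^ (-α) / ((i : ℝ) ^ (-α) + τ) = n)
    (c : ℝ) (hc : c = (α * Real.sin (Real.pi / α) / Real.pi) ^ α) :
    c * n ^ α ≤ τ⁻¹ ∧ τ⁻¹ ≤ c * (n + 1 + ((p : ℝ) + 1) / (α - 1)) ^ α := by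
  have hα0 : 0 < α := by linarith
  have hsum' : ∑ i ∈ Finset.Icc 1 p, (1 + τ * (i : ℝ) ^ α)⁻¹ = n := by
    rw [← hsum]
    refine Finset.sum_congr rfl fun i hi => (rpow_neg_div_rpow_neg_add ?_ α τ).symm
    exact_mod_cast (Finset.mem_Icc.1 hi).1
  have hτp : ((p : ℝ) + 1) ^ (-α) ≤ τ := add_one_rpow_neg_le_of_sum_lt hα0.le hτ.le
    (by rwa [hsum', ← three_add_div_four_add_eq, ← hk])
  set I := π / (α * sin (π / α))
  have hI : 0 < I := div_pos pi_pos (mul_pos hα0 (sin_pi_div_pos hα))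
  have hlower : n ≤ τ ^ (-α⁻¹) * I := by
    rw [← hsum', ← integral_inv_one_add_mul_rpow hα hτ]
    exact sum_Icc_inv_one_add_mul_rpow_le_integral hα hτ p
  have hupper : τ ^ (-α⁻¹) * I ≤ n + 1 + (p + 1) / (α - 1) := by
    have := integral_inv_one_add_mul_rpow_le_sum_Icc_add hα hτp
    rw [integral_inv_one_add_mul_rpow hα hτ, hsum'] at this
    linarith
  rw [hc, ← inv_div, inv_eq_inv_rpow_mul_rpow hα0.ne' hτ hI]
  exact ⟨by gcongr, by gcongr⟩

/-- Non-asymptotic bounds on the effective ridge parameter `τ` for the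
finite-dimensional power-law covariance `λ_i = i^{-α}`, `i = 1,…,p`, when
`∑_{i=1}^p λ_i/(λ_i + τ) = n` and `0 < n < p k` with `k = (3 + 2^{-α})/(4 + 2^{-(α-2)})`:
`c n^α ≤ τ⁻¹ ≤ c (n + 1 + (p+1)/(α-1))^α` with `c = (α sin(π/α)/π)^α`. -/
theorem effective_ridge_nonasymptotic_bounds
    (α : ℝ) (hα : 1 < α) (p : ℕ) (hp : 1 ≤ p)
    (k : ℝ) (hk : k = (3 + (2 : ℝ) ^ (-α)) / (4 + (2 : ℝ) ^ (-(α - 2))))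
    (n : ℝ) (hn0 : 0 < n) (hnp : n < p * k)
    (τ : ℝ) (hτ : 0 < τ)
    (hsum : ∑ i ∈ Finset.Icc 1 p, (i : ℝ) ^ (-α) / ((i : ℝ) ^ (-α) + τ) = n)
    (c : ℝ) (hc : c = (α * Real.sin (Real.pi / α) / Real.pi) ^ α) :
    c * n ^ α ≤ τ⁻¹ ∧ τ⁻¹ ≤ c * (n + 1 + ((p : ℝ) + 1) / (α - 1)) ^ α :=
  effective_ridge_nonasymptotic_bounds_general α hα p k hk n hn0 hnp τ hτ hsum c hc
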